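/- arXiv:nlin/0102019 — 2 statements merged into one kernel-verified Lean document; each statement's English description precedes it below -/
import Mathlib

section
/- Let Λ and A be 2×2 complex matrices with tr(A) = 0, [Λ, A] = Λ, and Λ ≠ 0. Then det(A) = −1/4, i.e., the eigenvalues of A are ±1/2. -/
/-!
The relation reads `Λ * A = (A + 1) * Λ`, hence `Λ * A ^ 2 = (A + 1) ^ 2 * Λ`. By Cayley–Hamilton
the traceless `A` squares to the scalar `-det A`, so the two sides differ by `(2 * A + 1) * Λ`,
which must vanish. As `Λ ≠ 0`, the matrix `2 * A + 1` is singular, and its determinant is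
`4 * det A + 1`.
-/

theorem two_mul_add_one_mul_eq_zero_of_mul_sub_mul_eq_self {S : Type*} [Ring S] {Λ A c : S}
    (hA : A ^ 2 = c) (hc : Commute c Λ) (h : Λ * A - A * Λ = Λ) : (2 * A + 1) * Λ = 0 := by
  have hsemi : SemiconjBy Λ A (A + 1) := by
    rw [SemiconjBy, add_mul, one_mul]
    exact sub_eq_iff_eq_add'.mp h
  calc (2 * A + 1) * Λ = (A + 1) ^ 2 * Λ - A ^ 2 * Λ := by noncomm_ring
    _ = Λ * A ^ 2 - c * Λ := by rw [← (hsemi.pow_right 2).eq, hA]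
    _ = 0 := by rw [hA, hc.eq, sub_self]

namespace Matrix

variable {R : Type*} [CommRing R]

theorem sq_eq_neg_det_smul_one_of_trace_eq_zero {A : Matrix (Fin 2) (Fin 2) R}
    (hA : A.trace = 0) : A ^ 2 = -A.det • 1 := by
  have hd : A 1 1 = -A 0 0 := eq_neg_of_add_eq_zero_right (A.trace_fin_two ▸ hA)
  ext i j
  fin_cases i <;> fin_cases j <;>
    simp only [Fin.zero_eta, Fin.mk_one, sq, mul_apply, Fin.sum_univ_two, det_fin_two, hd,
      Matrix.smul_apply, one_apply_eq, one_apply_ne zero_ne_one, one_apply_ne one_ne_zero,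
      smul_eq_mul] <;> ring

theorem det_add_one_fin_two (A : Matrix (Fin 2) (Fin 2) R) :
    (A + 1).det = A.det + A.trace + 1 := by
  simp only [det_fin_two, trace_fin_two, Matrix.add_apply, one_apply_eq, one_apply_ne zero_ne_one,
    one_apply_ne one_ne_zero]
  ring

end Matrix

theorem stmt_2 (Λ A : Matrix (Fin 2) (Fin 2) ℂ)
    (hA : A.trace = 0) (hcomm : Λ * A - A * Λ = Λ) (hΛ : Λ ≠ 0) :
    A.det = -1/4 := by
  have hkill : (2 * A + 1) * Λ = 0 :=
    two_mul_add_one_mul_eq_zero_of_mul_sub_mul_eq_self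
      (Matrix.sq_eq_neg_det_smul_one_of_trace_eq_zero hA) ((Commute.one_left Λ).smul_left _) hcomm
  have hdet : (2 * A + 1).det = 0 := by
    refine (smul_eq_zero.mp ?_).resolve_right hΛ
    rw [← one_mul Λ, ← smul_mul_assoc, ← Matrix.adjugate_mul, mul_assoc, hkill, mul_zero]
  rw [two_mul, ← two_smul ℂ A, Matrix.det_add_one_fin_two, Matrix.trace_smul, Matrix.det_smul, hA,
    Fintype.card_fin, smul_zero, add_zero] at hdet
  linear_combination hdet / 4
end

section
/- Let Λ and A be 2×2 complex matrices with tr(A) = 0, a² + bc = 1/4 where a = A₁₁, b = A₁₂, c = A₂₁, and a ≠ −1/2. If [Λ, A] = Λ, then there exists μ ∈ ℂ such that Λ₁₁ = −μ(a+1/2)b, Λ₁₂ = −μb², Λ₂₁ = μ(a+1/2)², Λ₂₂ = μ(a+1/2)b. (Uniqueness of the solution family.) -/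
/-!
Squaring `ΛA = (A + 1)Λ` against `4A² = 1` (Cayley–Hamilton for the traceless `A`) gives
`(2A + 1)Λ = 0` and `Λ(2A - 1) = 0`: the columns of `Λ` lie in the `-1/2`-eigenspace of `A`,
its rows in the left `1/2`-eigenspace. As `a + 1/2 ≠ 0`, these are the lines spanned by
`(-b, a + 1/2)` and `(a + 1/2, b)`, so `Λ` is a multiple of their outer product.
-/

open Matrix

section Ring
variable {R : Type*} [Ring R] {A Λ : R}

theorem two_mul_add_one_mul_eq_zero_of_mul_sub_mul_eq_self_s5 (h2 : IsUnit (2 : R))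
    (hA : 4 * (A * A) = 1) (hcomm : Λ * A - A * Λ = Λ) : (2 * A + 1) * Λ = 0 := by
  have hc : Λ * A = Λ + A * Λ := eq_add_of_sub_eq hcomm
  have hsq : Λ * (A * A) = A * A * Λ + 2 * (A * Λ) + Λ := by
    rw [← mul_assoc, hc, add_mul, mul_assoc, hc]; noncomm_ring
  have h4 : 2 * (2 * ((2 * A + 1) * Λ)) = 0 :=
    calc 2 * (2 * ((2 * A + 1) * Λ))
        = 4 * (A * A * Λ + 2 * (A * Λ) + Λ) - 4 * (A * A) * Λ := by noncomm_ring
      _ = Λ * (4 * (A * A)) - 4 * (A * A) * Λ := by rw [← hsq]; noncomm_ring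
      _ = 0 := by rw [hA, mul_one, one_mul, sub_self]
  rwa [h2.mul_right_eq_zero, h2.mul_right_eq_zero] at h4

theorem mul_two_mul_sub_one_eq_zero_of_mul_sub_mul_eq_self (h2 : IsUnit (2 : R))
    (hA : 4 * (A * A) = 1) (hcomm : Λ * A - A * Λ = Λ) : Λ * (2 * A - 1) = 0 :=
  calc Λ * (2 * A - 1) = 2 * (Λ * A - A * Λ) - 2 * Λ + (2 * A + 1) * Λ := by noncomm_ring
    _ = 0 := by
      rw [hcomm, two_mul_add_one_mul_eq_zero_of_mul_sub_mul_eq_self_s5 h2 hA hcomm, add_zero,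
        sub_self]

end Ring

theorem Matrix.mul_self_eq_neg_det_smul_one_of_trace_eq_zero {R : Type*} [CommRing R]
    (A : Matrix (Fin 2) (Fin 2) R) (hA : A.trace = 0) :
    A * A = -A.det • (1 : Matrix (Fin 2) (Fin 2) R) := by
  have hd : A 1 1 = -A 0 0 := by rw [trace_fin_two] at hA; linear_combination hA
  ext i j
  fin_cases i <;> fin_cases j <;> simp [mul_apply, det_fin_two, hd] <;> ring

theorem Matrix.exists_rank_one_fin_two {K : Type*} [Field K] (M : Matrix (Fin 2) (Fin 2) K)
    {t b : K} (ht : t ≠ 0) (hcol : t * M 0 0 + b * M 1 0 = 0) (hrow₀ : b * M 0 0 = t * M 0 1)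
    (hrow₁ : b * M 1 0 = t * M 1 1) :
    ∃ μ, M 0 0 = -μ * t * b ∧ M 0 1 = -μ * b ^ 2 ∧
      M 1 0 = μ * t ^ 2 ∧ M 1 1 = μ * t * b := by
  refine ⟨M 1 0 / t ^ 2, ?_, ?_, ?_, ?_⟩ <;> field_simp
  · linear_combination hcol
  · linear_combination b * hcol - t * hrow₀
  · linear_combination -hrow₁

theorem stmt_5 (Λ A : Matrix (Fin 2) (Fin 2) ℂ)
    (hA : A.trace = 0)
    (h : A 0 0 ^ 2 + A 0 1 * A 1 0 = 1/4)
    (ha : A 0 0 ≠ -1/2)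
    (hcomm : Λ * A - A * Λ = Λ) :
    ∃ μ : ℂ, Λ 0 0 = -μ * (A 0 0 + 1/2) * A 0 1 ∧
      Λ 0 1 = -μ * A 0 1 ^ 2 ∧
      Λ 1 0 = μ * (A 0 0 + 1/2) ^ 2 ∧
      Λ 1 1 = μ * (A 0 0 + 1/2) * A 0 1 := by
  have hd : A 1 1 = -A 0 0 := by rw [trace_fin_two] at hA; linear_combination hA
  have hsq : 4 * (A * A) = 1 := by
    have hdet : -A.det = 1 / 4 := by rw [det_fin_two, hd]; linear_combination h
    rw [A.mul_self_eq_neg_det_smul_one_of_trace_eq_zero hA, hdet, mul_smul_comm, mul_one,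
      ← map_ofNat (algebraMap ℂ (Matrix (Fin 2) (Fin 2) ℂ)), Algebra.smul_def, ← map_mul]
    norm_num
  have h2 : IsUnit (2 : Matrix (Fin 2) (Fin 2) ℂ) := by
    simpa only [map_ofNat] using (IsUnit.mk0 (2 : ℂ) two_ne_zero).map (algebraMap ℂ _)
  have hleft := two_mul_add_one_mul_eq_zero_of_mul_sub_mul_eq_self_s5 h2 hsq hcomm
  have hright := mul_two_mul_sub_one_eq_zero_of_mul_sub_mul_eq_self h2 hsq hcomm
  have e00 := congrFun (congrFun hleft 0) 0
  have e01 := congrFun (congrFun hright 0) 1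
  have e11 := congrFun (congrFun hright 1) 1
  simp only [two_mul, mul_apply, Fin.sum_univ_two, Matrix.add_apply, Matrix.sub_apply,
    Matrix.zero_apply, one_apply_eq, one_apply_ne zero_ne_one, add_zero, sub_zero, hd]
    at e00 e01 e11
  refine Λ.exists_rank_one_fin_two (fun ht => ha (by linear_combination ht)) ?_ ?_ ?_
  · linear_combination e00 / 2
  · linear_combination e01 / 2
  · linear_combination e11 / 2
end
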